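/- arXiv:2306.01235 — 5 statements merged into one kernel-verified Lean document; each statement's English description precedes it below -/
import Mathlib

section
/- The map p : ℤ⁺ → SC_k^{n,l}, p(t) = x_{t mod l}, is not a pseudo-(2,k)-covering map in the sense of Definition 4: condition (1) fails, i.e., p^{-1}(N_k(x_b,1)) cannot be written as a union ⋃_{i∈M} N_2(e_i,1) with all e_i ∈ p^{-1}(x_b). -/
/-- k(t,n)-adjacency on ℤ^n: distinct points, each coordinate differs by 0 or ±1,
and at most `t` coordinates differ. -/
def ktAdj (t n : ℕ) (p q : Fin n → ℤ) : Prop :=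
  p ≠ q ∧ (∀ i, p i = q i ∨ |p i - q i| = 1) ∧
    (Finset.univ.filter fun i => p i ≠ q i).card ≤ t

/-- k(t,n) = Σ_{i=1}^{t} 2^i C(n,i). -/
def kval (t n : ℕ) : ℕ := ∑ i ∈ Finset.Icc 1 t, 2 ^ i * n.choose i

/-- digital neighborhood N(x,1) inside X. -/
def dnbd {α : Type*} (adj : α → α → Prop) (X : Set α) (x : α) : Set α :=
  {x' ∈ X | adj x x'} ∪ {x}

/-- digital continuity on X. -/
def DCont {α β : Type*} (adjX : α → α → Prop) (adjY : β → β → Prop)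
    (X : Set α) (f : α → β) : Prop :=
  ∀ x ∈ X, ∀ x' ∈ X, adjX x x' → f x = f x' ∨ adjY (f x) (f x')

/-- f restricted to A is a digital isomorphism onto B:
an adjacency preserving and reflecting bijection. -/
def IsoOn {α β : Type*} (adjX : α → α → Prop) (adjY : β → β → Prop)
    (f : α → β) (A : Set α) (B : Set β) : Prop :=
  Set.BijOn f A B ∧ ∀ a ∈ A, ∀ a' ∈ A, (adjX a a' ↔ adjY (f a) (f a'))

/-- local (k₀,k₁)-isomorphism. -/
def LocalIso {α β : Type*} (adjX : α → α → Prop) (adjY : β → β → Prop)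
    (X : Set α) (Y : Set β) (f : α → β) : Prop :=
  Set.MapsTo f X Y ∧ ∀ x ∈ X, IsoOn adjX adjY f (dnbd adjX X x) (dnbd adjY Y (f x))

/-- weakly local (k₀,k₁)-isomorphism. -/
def WLIso {α β : Type*} (adjX : α → α → Prop) (adjY : β → β → Prop)
    (X : Set α) (Y : Set β) (f : α → β) : Prop :=
  Set.MapsTo f X Y ∧ ∀ x ∈ X, IsoOn adjX adjY f (dnbd adjX X x) (f '' dnbd adjX X x)

/-- digital connectedness of (X, adj). -/
def DConn {α : Type*} (adj : α → α → Prop) (X : Set α) : Prop :=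
  ∀ x ∈ X, ∀ y ∈ X, Relation.ReflTransGen (fun a b => a ∈ X ∧ b ∈ X ∧ adj a b) x y

/-- pseudo-(k₀,k₁)-covering map in the sense of Definition 4. -/
def PseudoCov {α β : Type*} (adjX : α → α → Prop) (adjY : β → β → Prop)
    (E : Set α) (B : Set β) (p : α → β) : Prop :=
  Set.MapsTo p E B ∧ Set.SurjOn p E B ∧
  ∀ b ∈ B, ∃ M : Set α, M ⊆ E ∩ p ⁻¹' {b} ∧
    (p ⁻¹' (dnbd adjY B b) ∩ E = ⋃ e ∈ M, dnbd adjX E e) ∧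
    (∀ e ∈ M, ∀ e' ∈ M, e ≠ e' → dnbd adjX E e ∩ dnbd adjX E e' = ∅) ∧
    (∀ e ∈ M, p '' dnbd adjX E e ⊆ dnbd adjY B b ∧
      IsoOn adjX adjY p (dnbd adjX E e) (p '' dnbd adjX E e))

/-- digital (k₀,k₁)-covering map. -/
def DigCov {α β : Type*} (adjX : α → α → Prop) (adjY : β → β → Prop)
    (E : Set α) (B : Set β) (p : α → β) : Prop :=
  Set.MapsTo p E B ∧ Set.SurjOn p E B ∧
  ∀ b ∈ B, ∃ M : Set α, M ⊆ E ∩ p ⁻¹' {b} ∧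
    (p ⁻¹' (dnbd adjY B b) ∩ E = ⋃ e ∈ M, dnbd adjX E e) ∧
    (∀ e ∈ M, ∀ e' ∈ M, e ≠ e' → dnbd adjX E e ∩ dnbd adjX E e' = ∅) ∧
    (∀ e ∈ M, IsoOn adjX adjY p (dnbd adjX E e) (dnbd adjY B b))

/-- p : ℤ⁺ → SC_k^{n,l}, p(t) = x_{t mod l}, is not a
pseudo-(2,k)-covering map in the sense of Definition 4: condition (1) fails,
i.e. for some b the preimage p⁻¹(N_k(b,1)) cannot be written as a union
⋃_{i∈M} N_2(e_i,1) with all e_i ∈ p⁻¹(b). -/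
theorem stmt9 (n l tk : ℕ) (hl : 4 ≤ l) (x : ZMod l → (Fin n → ℤ))
    (hinj : Function.Injective x)
    (hadj : ∀ i j : ZMod l, ktAdj tk n (x i) (x j) ↔ (j = i + 1 ∨ j = i - 1)) :
    (∃ b ∈ Set.range x,
      ¬ ∃ M : Set ℤ, M ⊆ {s : ℤ | 0 ≤ s} ∩ (fun s : ℤ => x (s : ZMod l)) ⁻¹' {b} ∧
        (fun s : ℤ => x (s : ZMod l)) ⁻¹' (dnbd (ktAdj tk n) (Set.range x) b) ∩
            {s : ℤ | 0 ≤ s} =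
          ⋃ e ∈ M, dnbd (fun s t : ℤ => |s - t| = 1) {s : ℤ | 0 ≤ s} e) ∧
    ¬ PseudoCov (fun s t : ℤ => |s - t| = 1) (ktAdj tk n) {s : ℤ | 0 ≤ s}
        (Set.range x) (fun s : ℤ => x (s : ZMod l)) := by
  have hl2 : ¬ ((l : ℤ) ∣ 1) := by
    intro h
    have := Int.le_of_dvd one_pos h
    omega
  have hl3 : ¬ ((l : ℤ) ∣ 2) := by
    intro h
    have := Int.le_of_dvd two_pos h
    omega
  have key : ¬ ∃ M : Set ℤ, M ⊆ {s : ℤ | 0 ≤ s} ∩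
        (fun s : ℤ => x (s : ZMod l)) ⁻¹' {x (-1)} ∧
      (fun s : ℤ => x (s : ZMod l)) ⁻¹' (dnbd (ktAdj tk n) (Set.range x) (x (-1))) ∩
          {s : ℤ | 0 ≤ s} =
        ⋃ e ∈ M, dnbd (fun s t : ℤ => |s - t| = 1) {s : ℤ | 0 ≤ s} e := by
    rintro ⟨M, hM, hU⟩
    have h0 : (0 : ℤ) ∈
        (fun s : ℤ => x (s : ZMod l)) ⁻¹' (dnbd (ktAdj tk n) (Set.range x) (x (-1))) ∩
          {s : ℤ | 0 ≤ s} := by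
      refine ⟨Or.inl ⟨⟨0, by norm_num⟩, ?_⟩, Set.mem_setOf_eq ▸ le_refl (0:ℤ)⟩
      rw [hadj]
      left
      push_cast
      ring
    rw [hU] at h0
    simp only [Set.mem_iUnion] at h0
    obtain ⟨e, heM, he⟩ := h0
    obtain ⟨heE, heb⟩ := hM heM
    have heq : x ((e : ℤ) : ZMod l) = x (-1) := heb
    have hel : ((e : ℤ) : ZMod l) = -1 := hinj heq
    have hE0 : (0 : ℤ) ≤ e := heE
    rcases he with ⟨-, habs⟩ | h
    · -- |e - 0| = 1 and e ≥ 0, so e = 1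
      have he1 : e = 1 := by
        rcases abs_eq (by norm_num : (0:ℤ) ≤ 1) |>.mp habs with h | h <;> omega
      subst he1
      have : ((2 : ℤ) : ZMod l) = 0 := by
        have := hel
        push_cast at this ⊢
        linear_combination this
      exact hl3 ((ZMod.intCast_zmod_eq_zero_iff_dvd 2 l).mp this)
    · -- 0 = e
      have he0 : e = 0 := h.symm
      subst he0
      have : ((1 : ℤ) : ZMod l) = 0 := by
        push_cast at hel ⊢
        linear_combination hel
      exact hl2 ((ZMod.intCast_zmod_eq_zero_iff_dvd 1 l).mp this)
  refine ⟨⟨x (-1), ⟨-1, rfl⟩, key⟩, ?_⟩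
  intro hpc
  obtain ⟨M, hsub, hunion, -, -⟩ := hpc.2.2 (x (-1)) ⟨-1, rfl⟩
  exact key ⟨M, hsub, hunion⟩
end

section
/- Every pseudo-(k₀,k₁)-covering map (in the sense of Definition 4) between connected digital images is a local (k₀,k₁)-isomorphism, and hence a digital (k₀,k₁)-covering map. -/
lemma ktAdj_symm {t n : ℕ} {p q : Fin n → ℤ} (h : ktAdj t n p q) : ktAdj t n q p := by
  obtain ⟨h1, h2, h3⟩ := h
  refine ⟨h1.symm, fun i => ?_, ?_⟩
  · rcases h2 i with h | h
    · exact Or.inl h.symm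
    · exact Or.inr (by rw [abs_sub_comm]; exact h)
  · have : (Finset.univ.filter fun i => q i ≠ p i) =
        (Finset.univ.filter fun i => p i ≠ q i) := by
      apply Finset.filter_congr; intro i _; simp [ne_comm]
    rw [this]; exact h3

/-- every pseudo-(k₀,k₁)-covering map (Definition 4) between
connected digital images is a local (k₀,k₁)-isomorphism, hence a digital
(k₀,k₁)-covering map. -/
theorem stmt13 (t₀ n₀ t₁ n₁ : ℕ)
    (E : Set (Fin n₀ → ℤ)) (B : Set (Fin n₁ → ℤ))
    (hE : DConn (ktAdj t₀ n₀) E) (hB : DConn (ktAdj t₁ n₁) B)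
    (p : (Fin n₀ → ℤ) → (Fin n₁ → ℤ))
    (hp : PseudoCov (ktAdj t₀ n₀) (ktAdj t₁ n₁) E B p) :
    LocalIso (ktAdj t₀ n₀) (ktAdj t₁ n₁) E B p ∧
      DigCov (ktAdj t₀ n₀) (ktAdj t₁ n₁) E B p := by

  obtain ⟨hmap, hsurj, hcond⟩ := hp
  -- Key step: for every x ∈ E, p maps dnbd E x isomorphically onto dnbd B (p x)
  have key : ∀ x ∈ E, IsoOn (ktAdj t₀ n₀) (ktAdj t₁ n₁) p
      (dnbd (ktAdj t₀ n₀) E x) (dnbd (ktAdj t₁ n₁) B (p x)) := by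
    intro x hx
    set b := p x with hbdef
    have hb : b ∈ B := hmap hx
    obtain ⟨M, hM, hcover, hdisj, hiso⟩ := hcond b hb
    have hxmem : x ∈ p ⁻¹' (dnbd (ktAdj t₁ n₁) B b) ∩ E :=
      ⟨Or.inr rfl, hx⟩
    rw [hcover] at hxmem
    simp only [Set.mem_iUnion] at hxmem
    obtain ⟨e, heM, hxe⟩ := hxmem
    have heE : e ∈ E := (hM heM).1
    have hpe : p e = b := (hM heM).2
    obtain ⟨himg, hbij, hadj⟩ := hiso e heM
    have hee : e ∈ dnbd (ktAdj t₀ n₀) E e := Or.inr rfl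
    have hxeq : x = e := hbij.injOn hxe hee (by rw [hpe])
    subst hxeq
    -- now show the image is all of dnbd B b
    have himg2 : p '' dnbd (ktAdj t₀ n₀) E x = dnbd (ktAdj t₁ n₁) B b := by
      apply Set.Subset.antisymm himg
      rintro b' (⟨hb'B, hadjbb'⟩ | hb'eq)
      · -- b' ∈ B, adj b b'
        obtain ⟨M', hM', hcover', _, _⟩ := hcond b' hb'B
        have hxmem' : x ∈ p ⁻¹' (dnbd (ktAdj t₁ n₁) B b') ∩ E :=
          ⟨Or.inl ⟨hb, ktAdj_symm hadjbb'⟩, hx⟩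
        rw [hcover'] at hxmem'
        simp only [Set.mem_iUnion] at hxmem'
        obtain ⟨e', he'M, hxe'⟩ := hxmem'
        have he'E : e' ∈ E := (hM' he'M).1
        have hpe' : p e' = b' := (hM' he'M).2
        rcases hxe' with ⟨_, hadje'x⟩ | hxeq'
        · exact ⟨e', Or.inl ⟨he'E, ktAdj_symm hadje'x⟩, hpe'⟩
        · exfalso; apply hadjbb'.1; rw [← hpe', ← hxeq']
      · exact ⟨x, Or.inr rfl, hb'eq.symm ▸ rfl⟩
    rw [himg2] at hbij
    exact ⟨hbij, hadj⟩
  constructor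
  · exact ⟨hmap, key⟩
  · refine ⟨hmap, hsurj, fun b hb => ?_⟩
    obtain ⟨M, hM, hcover, hdisj, _⟩ := hcond b hb
    refine ⟨M, hM, hcover, hdisj, fun e heM => ?_⟩
    have := key e (hM heM).1
    rwa [(hM heM).2] at this
end

section
/- For connected digital images (E,k₀) and (B,k₁), a surjection p : E → B is a digital (k₀,k₁)-covering map if and only if p is a local (k₀,k₁)-isomorphism. -/
lemma mem_dnbd_self {α : Type*} (adj : α → α → Prop) (X : Set α) (x : α) :
    x ∈ dnbd adj X x := Or.inr rfl

lemma dnbd_subset {α : Type*} {adj : α → α → Prop} {X : Set α} {x : α} (hx : x ∈ X) :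
    dnbd adj X x ⊆ X := by
  rintro y (⟨hy, _⟩ | hy)
  · exact hy
  · rw [Set.mem_singleton_iff] at hy; subst hy; exact hx

lemma mem_dnbd_of_adj {α : Type*} {adj : α → α → Prop} {X : Set α} {x y : α}
    (hy : y ∈ X) (h : adj x y) : y ∈ dnbd adj X x := Or.inl ⟨hy, h⟩

/-- symmetric flip of dnbd membership for ktAdj. -/
lemma dnbd_symm {t n : ℕ} {X : Set (Fin n → ℤ)} {x y : Fin n → ℤ}
    (hx : x ∈ X) (h : y ∈ dnbd (ktAdj t n) X x) : x ∈ dnbd (ktAdj t n) X y := by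
  rcases h with ⟨_, hadj⟩ | h
  · exact Or.inl ⟨hx, ktAdj_symm hadj⟩
  · subst h; exact Or.inr rfl

/-- for connected digital images, a surjection p : E → B is a
digital (k₀,k₁)-covering map iff p is a local (k₀,k₁)-isomorphism. -/
theorem stmt14 (t₀ n₀ t₁ n₁ : ℕ)
    (E : Set (Fin n₀ → ℤ)) (B : Set (Fin n₁ → ℤ))
    (hE : DConn (ktAdj t₀ n₀) E) (hB : DConn (ktAdj t₁ n₁) B)
    (p : (Fin n₀ → ℤ) → (Fin n₁ → ℤ))
    (hm : Set.MapsTo p E B) (hsurj : Set.SurjOn p E B) :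
    DigCov (ktAdj t₀ n₀) (ktAdj t₁ n₁) E B p ↔
      LocalIso (ktAdj t₀ n₀) (ktAdj t₁ n₁) E B p := by
  constructor
  · rintro ⟨-, -, hcov⟩
    refine ⟨hm, fun x hx => ?_⟩
    obtain ⟨M, hME, hunion, -, hiso⟩ := hcov (p x) (hm hx)
    have hxmem : x ∈ p ⁻¹' (dnbd (ktAdj t₁ n₁) B (p x)) ∩ E :=
      ⟨mem_dnbd_self _ _ _, hx⟩
    rw [hunion] at hxmem
    simp only [Set.mem_iUnion] at hxmem
    obtain ⟨e, heM, hxNe⟩ := hxmem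
    obtain ⟨heE, hpe⟩ := hME heM
    simp only [Set.mem_preimage, Set.mem_singleton_iff] at hpe
    have hiso' := hiso e heM
    have hex : e = x := by
      apply hiso'.1.injOn (mem_dnbd_self _ _ _) hxNe
      rw [hpe]
    rw [hex] at hiso'
    exact hiso'
  · rintro ⟨-, hloc⟩
    refine ⟨hm, hsurj, fun b hb => ?_⟩
    refine ⟨{e | e ∈ E ∧ p e = b}, ?_, ?_, ?_, ?_⟩
    · rintro e ⟨he, hpe⟩; exact ⟨he, hpe⟩
    · ext x
      simp only [Set.mem_iUnion, Set.mem_inter_iff, Set.mem_preimage]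
      constructor
      · rintro ⟨hpx, hx⟩
        have hbN : b ∈ dnbd (ktAdj t₁ n₁) B (p x) := dnbd_symm hb hpx
        obtain ⟨e, heN, hpe⟩ := (hloc x hx).1.surjOn hbN
        have heE : e ∈ E := dnbd_subset hx heN
        exact ⟨e, ⟨heE, hpe⟩, dnbd_symm hx heN⟩
      · rintro ⟨e, ⟨heE, hpe⟩, hxNe⟩
        have hx : x ∈ E := dnbd_subset heE hxNe
        have := (hloc e heE).1.mapsTo hxNe
        rw [hpe] at this
        exact ⟨this, hx⟩
    · rintro e ⟨heE, hpe⟩ e' ⟨heE', hpe'⟩ hne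
      by_contra hcon
      obtain ⟨x, hx1, hx2⟩ := Set.nonempty_iff_ne_empty.mpr hcon
      have hxE : x ∈ E := dnbd_subset heE hx1
      apply hne
      apply (hloc x hxE).1.injOn (dnbd_symm heE hx1) (dnbd_symm heE' hx2)
      rw [hpe, hpe']
    · rintro e ⟨heE, hpe⟩
      have := hloc e heE
      rw [hpe] at this
      exact this
end

section
/- A local (k₀,k₁)-isomorphism from a connected digital image onto a connected digital image is surjective; more precisely, if h : (X,k₀) → (Y,k₁) is a local (k₀,k₁)-isomorphism and (Y,k₁) is k₁-connected and X is nonempty, then h is surjective. -/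
/-- a local (k₀,k₁)-isomorphism h : (X,k₀) → (Y,k₁) with
(Y,k₁) k₁-connected and X nonempty is surjective. -/
theorem stmt15 (t₀ n₀ t₁ n₁ : ℕ)
    (X : Set (Fin n₀ → ℤ)) (Y : Set (Fin n₁ → ℤ))
    (h : (Fin n₀ → ℤ) → (Fin n₁ → ℤ))
    (hl : LocalIso (ktAdj t₀ n₀) (ktAdj t₁ n₁) X Y h)
    (hY : DConn (ktAdj t₁ n₁) Y) (hX : X.Nonempty) :
    Set.SurjOn h X Y := by
  obtain ⟨x₀, hx₀⟩ := hX
  intro y hy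
  have key : ∀ z, Relation.ReflTransGen
      (fun a b => a ∈ Y ∧ b ∈ Y ∧ ktAdj t₁ n₁ a b) (h x₀) z → z ∈ h '' X := by
    intro z hz
    induction hz with
    | refl => exact ⟨x₀, hx₀, rfl⟩
    | tail _ hstep ih =>
      obtain ⟨x, hx, rfl⟩ := ih
      obtain ⟨hzY, hz'Y, hadj⟩ := hstep
      have hiso := (hl.2 x hx).1
      have hmem : _ ∈ dnbd (ktAdj t₁ n₁) Y (h x) := Or.inl ⟨hz'Y, hadj⟩
      obtain ⟨x', hx', hhx'⟩ := hiso.surjOn hmem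
      have hx'X : x' ∈ X := by
        rcases hx' with h1 | h1
        · exact h1.1
        · exact h1 ▸ hx
      exact ⟨x', hx'X, hhx'⟩
  exact key y (hY (h x₀) (hl.1 hx₀) y hy)
end

section
/- A weakly local (k₀,k₁)-isomorphic surjection between connected digital images need not be a local (k₀,k₁)-isomorphism: the map p : ℤ⁺ → SC_k^{n,l}, p(t) = x_{t mod l} (l ≥ 4), is a weakly local (2,k)-isomorphic surjection but not a local (2,k)-isomorphism, because p restricted to N_2(0,1) = {0,1} is not surjective onto N_k(x_0,1) = {x_{l−1}, x_0, x_1}. -/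
lemma castZ_inj (l : ℕ) {a b : ℤ} (h : |a - b| < (l : ℤ)) :
    ((a : ZMod l) = (b : ZMod l)) ↔ a = b := by
  constructor
  · intro hc
    have hd : (l : ℤ) ∣ b - a := ((ZMod.intCast_eq_intCast_iff a b l).mp hc).dvd
    have h0 : b - a = 0 := Int.eq_zero_of_abs_lt_dvd hd (by rwa [abs_sub_comm] at h)
    omega
  · rintro rfl; rfl

lemma habs1 (a b : ℤ) : |a - b| = 1 ↔ (b = a + 1 ∨ b = a - 1) := by
  rw [abs_eq (by norm_num : (0:ℤ) ≤ 1)]; omega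

/-- the map p : ℤ⁺ → SC_k^{n,l}, p(t) = x_{t mod l} (l ≥ 4), is a
weakly local (2,k)-isomorphic surjection but not a local (2,k)-isomorphism:
N_2(0,1) = {0,1} and p restricted to N_2(0,1) is not surjective onto
N_k(x_0,1) = {x_{l-1}, x_0, x_1}. -/
theorem stmt19 (n l tk : ℕ) (hl : 4 ≤ l) (x : ZMod l → (Fin n → ℤ))
    (hinj : Function.Injective x)
    (hadj : ∀ i j : ZMod l, ktAdj tk n (x i) (x j) ↔ (j = i + 1 ∨ j = i - 1)) :
    WLIso (fun s t : ℤ => |s - t| = 1) (ktAdj tk n) {s : ℤ | 0 ≤ s} (Set.range x)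
        (fun s : ℤ => x (s : ZMod l)) ∧
    Set.SurjOn (fun s : ℤ => x (s : ZMod l)) {s : ℤ | 0 ≤ s} (Set.range x) ∧
    ¬ LocalIso (fun s t : ℤ => |s - t| = 1) (ktAdj tk n) {s : ℤ | 0 ≤ s}
        (Set.range x) (fun s : ℤ => x (s : ZMod l)) ∧
    dnbd (fun s t : ℤ => |s - t| = 1) {s : ℤ | 0 ≤ s} 0 = {0, 1} ∧
    dnbd (ktAdj tk n) (Set.range x) (x 0) = {x (-1), x 0, x 1} ∧
    ¬ Set.SurjOn (fun s : ℤ => x (s : ZMod l))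
        (dnbd (fun s t : ℤ => |s - t| = 1) {s : ℤ | 0 ≤ s} 0)
        (dnbd (ktAdj tk n) (Set.range x) (x 0)) := by
  haveI : NeZero l := ⟨by omega⟩
  have hl4 : (4 : ℤ) ≤ l := by exact_mod_cast hl
  set p : ℤ → (Fin n → ℤ) := fun s : ℤ => x (s : ZMod l) with hp
  set X : Set ℤ := {s : ℤ | 0 ≤ s} with hX
  set adjZ : ℤ → ℤ → Prop := fun s t : ℤ => |s - t| = 1 with hadjZdef
  -- membership in the ℤ-neighborhood
  have hmem : ∀ s a : ℤ, a ∈ dnbd adjZ X s ↔ ((0 ≤ a ∧ |s - a| = 1) ∨ a = s) := by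
    intro s a
    simp [dnbd, hX, hadjZdef, Set.mem_union, Set.mem_setOf_eq, Set.mem_singleton_iff]
    tauto
  have hmem' : ∀ s a : ℤ, a ∈ dnbd adjZ X s → (a = s - 1 ∨ a = s ∨ a = s + 1) := by
    intro s a ha
    rcases (hmem s a).mp ha with ⟨_, h1⟩ | h1
    · rw [habs1] at h1; omega
    · omega
  -- adjacency correspondence for close integers
  have hadjZ2 : ∀ a b : ℤ, |a - b| ≤ 2 → (ktAdj tk n (x a) (x b) ↔ |a - b| = 1) := by
    intro a b hab
    rw [hadj, habs1]
    have hab' := abs_le.mp hab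
    constructor
    · rintro (h | h)
      · left
        have h' : ((b : ℤ) : ZMod l) = ((a + 1 : ℤ) : ZMod l) := by push_cast; rw [h]
        exact (castZ_inj l (by rw [abs_lt]; omega)).mp h'
      · right
        have h' : ((b : ℤ) : ZMod l) = ((a - 1 : ℤ) : ZMod l) := by push_cast; rw [h]
        exact (castZ_inj l (by rw [abs_lt]; omega)).mp h'
    · rintro (rfl | rfl)
      · left; push_cast; ring
      · right; push_cast; ring
  -- part 4
  have h4 : dnbd adjZ X (0 : ℤ) = {0, 1} := by
    ext t
    rw [hmem]
    simp only [Set.mem_insert_iff, Set.mem_singleton_iff, habs1]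
    omega
  -- part 5
  have h5 : dnbd (ktAdj tk n) (Set.range x) (x 0) = {x (-1), x 0, x 1} := by
    ext y
    simp only [dnbd, Set.mem_union, Set.mem_setOf_eq, Set.mem_singleton_iff,
      Set.mem_insert_iff, Set.mem_range]
    constructor
    · rintro (⟨⟨j, rfl⟩, hk⟩ | rfl)
      · rcases (hadj 0 j).mp hk with rfl | rfl
        · right; right; rw [zero_add]
        · left; rw [zero_sub]
      · right; left; rfl
    · rintro (rfl | rfl | rfl)
      · left; exact ⟨⟨-1, rfl⟩, (hadj 0 (-1)).mpr (Or.inr (by ring))⟩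
      · right; rfl
      · left; exact ⟨⟨1, rfl⟩, (hadj 0 1).mpr (Or.inl (by ring))⟩
  -- part 6
  have h6 : ¬ Set.SurjOn p (dnbd adjZ X 0) (dnbd (ktAdj tk n) (Set.range x) (x 0)) := by
    intro h
    obtain ⟨a, ha, he⟩ := h (by rw [h5]; left; rfl)
    rw [h4] at ha
    have ha' : (a : ZMod l) = ((-1 : ℤ) : ZMod l) := by
      have := hinj he
      push_cast
      exact this
    rcases ha with rfl | rfl
    · have := (castZ_inj l (by rw [abs_lt]; omega)).mp ha'
      omega
    · have := (castZ_inj l (by rw [abs_lt]; omega)).mp ha'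
      omega
  refine ⟨?_, ?_, ?_, h4, h5, h6⟩
  · -- WLIso
    refine ⟨fun s _ => Set.mem_range_self _, fun s hs => ?_⟩
    have hinjOn : Set.InjOn p (dnbd adjZ X s) := by
      intro a ha b hb hab
      have ha' := hmem' s a ha
      have hb' := hmem' s b hb
      have : (a : ZMod l) = (b : ZMod l) := hinj hab
      have := (castZ_inj l (by rw [abs_lt]; omega)).mp this
      exact this
    refine ⟨hinjOn.bijOn_image, fun a ha b hb => ?_⟩
    have ha' := hmem' s a ha
    have hb' := hmem' s b hb
    exact (hadjZ2 a b (by rw [abs_le]; omega)).symm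
  · -- SurjOn onto range
    rintro y ⟨i, rfl⟩
    refine ⟨(i.val : ℤ), by simp only [hX, Set.mem_setOf_eq]; exact Int.natCast_nonneg _, ?_⟩
    show x (((i.val : ℤ) : ZMod l)) = x i
    congr 1
    push_cast
    simp [ZMod.natCast_val, ZMod.cast_id]
  · -- not LocalIso
    rintro ⟨_, h⟩
    have h0 := (h 0 (by simp only [hX, Set.mem_setOf_eq]; exact le_refl 0)).1.2.2
    have hp0 : p 0 = x 0 := by show x (((0:ℤ) : ZMod l)) = x 0; norm_num
    rw [hp0] at h0
    exact h6 h0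
end
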